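/- arXiv:1405.7579 — 5 statements merged into one kernel-verified Lean document; each statement's English description precedes it below -/
import Mathlib

section
/- For a point P = (x_p, y_p) and a line l = {(x,y) : a*x + b*y + c = 0} with (a,b) ≠ (0,0), the infimum of the taxicab distance |x_p - x| + |y_p - y| over points (x,y) on l equals |a*x_p + b*y_p + c| / max(|a|, |b|). -/
/-! The pairing of `(a, b)` with `(u, v)` is bounded by the sup norm of the first times the
ℓ¹ norm of the second, so every point of the line is at taxicab distance at least
`|a xp + b yp + c| / max |a| |b|` from `P`. Moving from `P` parallel to the axis of the larger
coefficient reaches the line after exactly that distance. -/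

lemma abs_mul_add_mul_le_max_mul {R : Type*} [CommRing R] [LinearOrder R] [IsStrictOrderedRing R]
    (a b u v : R) :
    |a * u + b * v| ≤ max |a| |b| * (|u| + |v|) :=
  calc |a * u + b * v| ≤ |a| * |u| + |b| * |v| := by
        simpa only [abs_mul] using abs_add_le (a * u) (b * v)
    _ ≤ max |a| |b| * |u| + max |a| |b| * |v| := by
        gcongr
        exacts [le_max_left _ _, le_max_right _ _]
    _ = max |a| |b| * (|u| + |v|) := by ring

section

variable {R : Type*} [Field R] [LinearOrder R] [IsStrictOrderedRing R]

lemma exists_mem_line_taxicab_eq_of_abs_le {a : R} (b c xp yp : R) (ha : a ≠ 0)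
    (hba : |b| ≤ |a|) :
    ∃ x y : R, a * x + b * y + c = 0 ∧
      |xp - x| + |yp - y| = |a * xp + b * yp + c| / max |a| |b| := by
  refine ⟨xp - (a * xp + b * yp + c) / a, yp, by field_simp; ring, ?_⟩
  rw [max_eq_left hba, sub_sub_cancel, sub_self, abs_zero, add_zero, abs_div]

lemma exists_mem_line_taxicab_eq {a b : R} (c xp yp : R) (hab : (a, b) ≠ (0, 0)) :
    ∃ x y : R, a * x + b * y + c = 0 ∧
      |xp - x| + |yp - y| = |a * xp + b * yp + c| / max |a| |b| := by
  rcases le_total |b| |a| with hba | hab_le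
  · have ha : a ≠ 0 := fun ha => hab (by simp_all)
    exact exists_mem_line_taxicab_eq_of_abs_le b c xp yp ha hba
  · have hb : b ≠ 0 := fun hb => hab (by simp_all)
    obtain ⟨y, x, hline, hdist⟩ := exists_mem_line_taxicab_eq_of_abs_le a c yp xp hb hab_le
    refine ⟨x, y, by linear_combination hline, ?_⟩
    rw [add_comm, hdist, max_comm, add_comm (b * yp)]

end

/-- Taxicab distance from a point to a line (Lemma 1). -/
theorem taxicab_dist_point_line (a b c xp yp : ℝ) (hab : (a, b) ≠ (0, 0)) :
    sInf {d : ℝ | ∃ x y : ℝ, a * x + b * y + c = 0 ∧ d = |xp - x| + |yp - y|} =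
      |a * xp + b * yp + c| / max |a| |b| := by
  obtain ⟨x₀, y₀, hline₀, hdist₀⟩ := exists_mem_line_taxicab_eq c xp yp hab
  have hmax : 0 < max |a| |b| := by
    by_contra! h
    exact hab (by simp_all [abs_nonpos_iff])
  refine IsLeast.csInf_eq ⟨⟨x₀, y₀, hline₀, hdist₀.symm⟩, ?_⟩
  rintro d ⟨x, y, hline, rfl⟩
  rw [div_le_iff₀' hmax]
  calc |a * xp + b * yp + c| = |a * (xp - x) + b * (yp - y)| := by
        congr 1; linear_combination hline
    _ ≤ max |a| |b| * (|xp - x| + |yp - y|) := abs_mul_add_mul_le_max_mul _ _ _ _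
end

section
/- Let F₁ = (x₁, y₁) and F₂ = (x₂, y₂) with x₁ = x₂, and let γ ≤ 0 with -γ > δ where δ = |y₁ - y₂| is the taxicab distance between the foci. Then the taxicab ellipse {(x,y) : |x-x₁| + |y-y₁| + |x-x₂| + |y-y₂| = -γ} is a hexagon: concretely, setting 2α = -γ - δ, it is the boundary of the convex hull of the six points (x₁ ± α, y) for y ∈ {y₁, y₂} and (x₁, min(y₁,y₂) - α), (x₁, max(y₁,y₂) + α). -/
/-!
With the foci on the vertical line `x = x₀` at heights `a ≤ b`, the sum of taxicab distances
of `(u, v)` to them is `2|u - x₀| + |v - a| + |v - b|`. On the strips `v ≤ a`, `a ≤ v ≤ b`,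
`b ≤ v` the condition "sum ≤ 2α + (b - a)" reads `|u - x₀| + (a - v) ≤ α`, `|u - x₀| ≤ α`,
`|u - x₀| + (v - b) ≤ α`: a triangle, a rectangle and a triangle, whose union is the convex hull
of the six points. The ellipse is the level set of a convex function strictly above its minimum,
hence the frontier of the corresponding sublevel set.
-/

open Set Filter Topology

theorem ConvexOn.frontier_setOf_le {E : Type*} [AddCommGroup E] [Module ℝ E] [TopologicalSpace E]
    [IsTopologicalAddGroup E] [ContinuousSMul ℝ E] {f : E → ℝ} (hf : ConvexOn ℝ univ f)
    (hf_cont : Continuous f) {c : ℝ} {q : E} (hq : f q < c) :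
    frontier {x | f x ≤ c} = {x | f x = c} := by
  refine (frontier_le_subset_eq hf_cont continuous_const).antisymm fun p (hp : f p = c) => ?_
  refine ⟨subset_closure hp.le, fun hint => ?_⟩
  -- An interior `p` could be pushed a little away from `q`, where convexity forces `f > c`.
  have hray : Tendsto (fun t : ℝ => p + t • (p - q)) (𝓝[>] 0) (𝓝 p) := by
    have : Continuous (fun t : ℝ => p + t • (p - q)) := by fun_prop
    simpa using this.continuousWithinAt.tendsto (x := 0) (s := Ioi 0)
  obtain ⟨t, ht_le, ht_pos⟩ :=
    ((hray.eventually (mem_interior_iff_mem_nhds.mp hint)).and self_mem_nhdsWithin).exists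
  have hseg : p ∈ openSegment ℝ q (p + t • (p - q)) := by
    refine ⟨t / (1 + t), 1 / (1 + t), by positivity, by positivity, by field_simp; ring, ?_⟩
    rw [smul_add, smul_smul, ← sub_eq_zero]
    match_scalars <;> field_simp <;> ring
  exact ((hf.lt_right_of_left_lt trivial trivial hseg (hp ▸ hq)).trans_le ht_le).ne hp

def taxicabDist (p q : ℝ × ℝ) : ℝ := |p.1 - q.1| + |p.2 - q.2|

theorem convexOn_taxicabDist (q : ℝ × ℝ) : ConvexOn ℝ univ (taxicabDist · q) :=
  ((convexOn_univ_dist q.1).comp_linearMap (LinearMap.fst ℝ ℝ ℝ)).add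
    ((convexOn_univ_dist q.2).comp_linearMap (LinearMap.snd ℝ ℝ ℝ))

theorem continuous_taxicabDist (q : ℝ × ℝ) : Continuous (taxicabDist · q) := by
  unfold taxicabDist; fun_prop

theorem smul_add_smul_add_smul_mem_convexHull {E : Type*} [AddCommGroup E] [Module ℝ E]
    (x y z : E) {a b c : ℝ} (ha : 0 ≤ a) (hb : 0 ≤ b) (hc : 0 ≤ c) (habc : a + b + c = 1) :
    a • x + b • y + c • z ∈ convexHull ℝ {x, y, z} := by
  simpa [Fin.sum_univ_three] using (convex_convexHull ℝ {x, y, z}).sum_mem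
    (t := Finset.univ) (w := ![a, b, c]) (z := ![x, y, z])
    (by simp [Fin.forall_fin_succ, ha, hb, hc]) (by simpa [Fin.sum_univ_three])
    (by simp [Fin.forall_fin_succ, subset_convexHull ℝ {x, y, z} _])

theorem mem_convexHull_triangle {x₀ a α h u t : ℝ} (hα : 0 < α) (ht : 0 ≤ t)
    (hu : |u - x₀| ≤ (1 - t) * α) :
    (u, a + t * h) ∈ convexHull ℝ {(x₀ + α, a), (x₀ - α, a), (x₀, a + h)} := by
  obtain ⟨hu₁, hu₂⟩ := abs_le.mp hu
  have key := smul_add_smul_add_smul_mem_convexHull (x₀ + α, a) (x₀ - α, a) (x₀, a + h)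
    (a := ((1 - t) * α + (u - x₀)) / (2 * α)) (b := ((1 - t) * α - (u - x₀)) / (2 * α))
    (div_nonneg (by linarith) (by positivity)) (div_nonneg (by linarith) (by positivity)) ht
    (by field_simp; ring)
  convert key using 1
  ext <;> simp <;> field_simp <;> ring

theorem Icc_prod_Icc_subset_convexHull {x₁ x₂ y₁ y₂ : ℝ} (hx : x₁ ≤ x₂) (hy : y₁ ≤ y₂) :
    Icc x₁ x₂ ×ˢ Icc y₁ y₂ ⊆ convexHull ℝ {(x₁, y₁), (x₂, y₁), (x₁, y₂), (x₂, y₂)} := by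
  have : ({(x₁, y₁), (x₂, y₁), (x₁, y₂), (x₂, y₂)} : Set (ℝ × ℝ)) = {x₁, x₂} ×ˢ {y₁, y₂} := by
    ext ⟨u, v⟩; simp; tauto
  rw [this, convexHull_prod, convexHull_pair, convexHull_pair, segment_eq_Icc hx,
    segment_eq_Icc hy]

theorem setOf_taxicabDist_add_le_subset_convexHull {x₀ a b α : ℝ} (hα : 0 < α) (hab : a ≤ b) :
    {p | taxicabDist p (x₀, a) + taxicabDist p (x₀, b) ≤ 2 * α + (b - a)} ⊆
      convexHull ℝ {(x₀ + α, a), (x₀ - α, a), (x₀ + α, b), (x₀ - α, b),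
        (x₀, a - α), (x₀, b + α)} := by
  rintro ⟨u, v⟩ hp
  simp only [taxicabDist, mem_ofPred_eq] at hp
  rcases lt_or_ge v a with hva | hva
  · have hu : |u - x₀| ≤ (1 - (a - v) / α) * α := by
      rw [sub_mul, div_mul_cancel₀ _ hα.ne', abs_of_neg (by linarith : v - a < 0),
        abs_of_neg (by linarith : v - b < 0)] at *
      linarith
    have hmem := mem_convexHull_triangle (a := a) (h := -α) hα (div_nonneg (by linarith) hα.le) hu
    rw [show a + (a - v) / α * -α = v by field_simp; ring] at hmem
    refine convexHull_mono ?_ hmem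
    simp [insert_subset_iff, sub_eq_add_neg]
  rcases le_or_gt v b with hvb | hvb
  · have hu : |x₀ - u| ≤ α := by
      rw [abs_of_nonneg (by linarith : 0 ≤ v - a), abs_of_nonpos (by linarith : v - b ≤ 0)] at hp
      rw [abs_sub_comm]
      linarith
    refine convexHull_mono ?_ (Icc_prod_Icc_subset_convexHull (by linarith) hab
      ⟨mem_Icc_iff_abs_le.mp hu, hva, hvb⟩)
    simp [insert_subset_iff]
  · have hu : |u - x₀| ≤ (1 - (v - b) / α) * α := by
      rw [sub_mul, div_mul_cancel₀ _ hα.ne', abs_of_pos (by linarith : 0 < v - a),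
        abs_of_pos (by linarith : 0 < v - b)] at *
      linarith
    have hmem := mem_convexHull_triangle (a := b) (h := α) hα (div_nonneg (by linarith) hα.le) hu
    rw [show b + (v - b) / α * α = v by field_simp; ring] at hmem
    refine convexHull_mono ?_ hmem
    simp [insert_subset_iff]

theorem convexHull_hexagon_eq_setOf_taxicabDist_add_le {x₀ a b α : ℝ} (hα : 0 < α) :
    convexHull ℝ {(x₀ + α, a), (x₀ - α, a), (x₀ + α, b), (x₀ - α, b),
        (x₀, min a b - α), (x₀, max a b + α)} =
      {p | taxicabDist p (x₀, a) + taxicabDist p (x₀, b) ≤ 2 * α + |a - b|} := by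
  wlog hab : a ≤ b generalizing a b
  · convert this (le_of_not_ge hab) using 2
    · ext; simp [min_comm, max_comm]; tauto
    · ext; simp [add_comm, abs_sub_comm]
  rw [min_eq_left hab, max_eq_right hab, abs_sub_comm, abs_of_nonneg (sub_nonneg.2 hab)]
  refine subset_antisymm (convexHull_min ?_ ?_)
    (setOf_taxicabDist_add_le_subset_convexHull hα hab)
  · intro p hp
    simp only [mem_insert_iff, mem_singleton_iff] at hp
    rcases hp with rfl | rfl | rfl | rfl | rfl | rfl <;>
      simp [taxicabDist, abs_of_pos hα, abs_of_nonpos, abs_of_nonneg, hab, hα.le] <;>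
      linarith [abs_of_nonpos (by linarith : a - α - b ≤ 0),
        abs_of_nonneg (by linarith : 0 ≤ b + α - a)]
  · simpa using ((convexOn_taxicabDist _).add (convexOn_taxicabDist _)).convex_le
      (2 * α + (b - a))

theorem frontier_setOf_taxicabDist_add_le {F₁ F₂ : ℝ × ℝ} {c : ℝ} (hc : taxicabDist F₁ F₂ < c) :
    frontier {p | taxicabDist p F₁ + taxicabDist p F₂ ≤ c} =
      {p | taxicabDist p F₁ + taxicabDist p F₂ = c} :=
  ((convexOn_taxicabDist F₁).add (convexOn_taxicabDist F₂)).frontier_setOf_le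
    ((continuous_taxicabDist F₁).add (continuous_taxicabDist F₂)) (q := F₁)
    (by simpa [taxicabDist] using hc)

theorem taxicab_ellipse_hexagon_general (x₁ y₁ x₂ y₂ γ : ℝ) (hx : x₁ = x₂)
    (hδ : -γ > |y₁ - y₂|) :
    let α : ℝ := (-γ - |y₁ - y₂|) / 2
    {p : ℝ × ℝ | |p.1 - x₁| + |p.2 - y₁| + |p.1 - x₂| + |p.2 - y₂| = -γ} =
      frontier (convexHull ℝ
        {(x₁ + α, y₁), (x₁ - α, y₁), (x₁ + α, y₂), (x₁ - α, y₂),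
         (x₁, min y₁ y₂ - α), (x₁, max y₁ y₂ + α)}) := by
  intro α
  subst hx
  have hα : 0 < α := by simp only [α]; linarith
  have hγ : 2 * α + |y₁ - y₂| = -γ := by simp only [α]; ring
  have hfoci : taxicabDist (x₁, y₁) (x₁, y₂) < -γ := by simpa [taxicabDist] using hδ
  rw [convexHull_hexagon_eq_setOf_taxicabDist_add_le hα, hγ,
    frontier_setOf_taxicabDist_add_le hfoci]
  simp only [taxicabDist, add_assoc]

/-- Taxi ellipse with vertically aligned foci and -γ > δ is a hexagon (E.1). -/
theorem taxicab_ellipse_hexagon (x₁ y₁ x₂ y₂ γ : ℝ) (hx : x₁ = x₂) (hγ : γ ≤ 0)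
    (hδ : -γ > |y₁ - y₂|) :
    let α : ℝ := (-γ - |y₁ - y₂|) / 2
    {p : ℝ × ℝ | |p.1 - x₁| + |p.2 - y₁| + |p.1 - x₂| + |p.2 - y₂| = -γ} =
      frontier (convexHull ℝ
        {(x₁ + α, y₁), (x₁ - α, y₁), (x₁ + α, y₂), (x₁ - α, y₂),
         (x₁, min y₁ y₂ - α), (x₁, max y₁ y₂ + α)}) :=
  taxicab_ellipse_hexagon_general x₁ y₁ x₂ y₂ γ hx hδ
end

section
/- Let F₁ = (x₁,y₁), F₂ = (x₂,y₂) with x₁ ≠ x₂ and y₁ ≠ y₂, and let γ ≤ 0 with -γ > δ = |x₁-x₂| + |y₁-y₂|. Setting 2α = -γ - δ, the closed region {(x,y) : |x-x₁|+|y-y₁|+|x-x₂|+|y-y₂| ≤ -γ} has Lebesgue measure (|x₁-x₂| + 2α)·(|y₁-y₂| + 2α) minus 2α², i.e. the taxicab ellipse region (an octagon) has area (|x₁-x₂|+2α)(|y₁-y₂|+2α) - 2α². -/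
/-!
By Fubini, the vertical slice of the region over `x` is the sublevel set
`|y - y₁| + |y - y₂| ≤ -γ - (|x - x₁| + |x - x₂|)`. On the line, `|t - a| + |t - b| ≤ c` is an
interval of length `c` centred at `(a + b) / 2` as soon as `|a - b| ≤ c`, and is empty otherwise.
So the area is the integral of `-γ - (|x - x₁| + |x - x₂|)` over the interval where this is
at least `|y₁ - y₂|`, an elementary integral of two absolute values.
-/

open MeasureTheory Set

lemma abs_sub_add_abs_sub_le_iff {a b c t : ℝ} (h : |a - b| ≤ c) :
    |t - a| + |t - b| ≤ c ↔ t ∈ Icc ((a + b - c) / 2) ((a + b + c) / 2) := by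
  rw [mem_Icc]
  rcases abs_cases (t - a) with ⟨h₁, h₁'⟩ | ⟨h₁, h₁'⟩ <;>
    rcases abs_cases (t - b) with ⟨h₂, h₂'⟩ | ⟨h₂, h₂'⟩ <;>
    rcases abs_cases (a - b) with ⟨h₃, h₃'⟩ | ⟨h₃, h₃'⟩ <;>
    constructor <;> intro <;> first | constructor <;> linarith | linarith

lemma volume_setOf_abs_sub_add_abs_sub_le (a b c : ℝ) :
    volume {t : ℝ | |t - a| + |t - b| ≤ c} = if |a - b| ≤ c then ENNReal.ofReal c else 0 := by
  split_ifs with h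
  · have hI : {t : ℝ | |t - a| + |t - b| ≤ c} = Icc ((a + b - c) / 2) ((a + b + c) / 2) :=
      Set.ext fun t => abs_sub_add_abs_sub_le_iff h
    rw [hI, Real.volume_Icc]
    ring_nf
  · convert measure_empty (μ := volume)
    refine eq_empty_of_forall_notMem fun t ht => h (le_trans ?_ ht)
    rw [abs_sub_comm t a]
    exact abs_sub_le a t b

lemma volume_setOf_abs_sub_add_abs_sub_le_sub {f : ℝ → ℝ} (hf : Measurable f) {a b c : ℝ}
    (hint : IntegrableOn (fun x => c - f x) {x | |a - b| ≤ c - f x}) :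
    volume {p : ℝ × ℝ | |p.2 - a| + |p.2 - b| ≤ c - f p.1} =
      ENNReal.ofReal (∫ x in {x | |a - b| ≤ c - f x}, (c - f x)) := by
  have hs : MeasurableSet {x | |a - b| ≤ c - f x} := measurableSet_le measurable_const (by fun_prop)
  rw [Measure.volume_eq_prod, Measure.prod_apply (measurableSet_le (by fun_prop) (by fun_prop)),
    ofReal_integral_eq_lintegral_ofReal hint
      (ae_restrict_of_forall_mem hs fun x hx => (abs_nonneg _).trans hx),
    ← lintegral_indicator hs]
  refine lintegral_congr fun x => ?_
  simp only [preimage_ofPred_eq, volume_setOf_abs_sub_add_abs_sub_le, indicator_apply,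
    mem_ofPred_eq]

lemma integral_abs_sub {l h a : ℝ} (hl : l ≤ a) (hh : a ≤ h) :
    ∫ x in l..h, |x - a| = ((a - l) ^ 2 + (h - a) ^ 2) / 2 := by
  have hi : ∀ u v : ℝ, IntervalIntegrable (fun x => |x - a|) volume u v :=
    fun u v => (by fun_prop : Continuous fun x : ℝ => |x - a|).intervalIntegrable u v
  have hleft : ∫ x in l..a, |x - a| = ∫ x in l..a, (a - x) :=
    intervalIntegral.integral_congr fun x hx => by
      rw [uIcc_of_le hl] at hx
      exact (abs_of_nonpos (sub_nonpos.2 hx.2)).trans (neg_sub _ _)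
  have hright : ∫ x in a..h, |x - a| = ∫ x in a..h, (x - a) :=
    intervalIntegral.integral_congr fun x hx => by
      rw [uIcc_of_le hh] at hx
      exact abs_of_nonneg (sub_nonneg.2 hx.1)
  rw [← intervalIntegral.integral_add_adjacent_intervals (hi l a) (hi a h), hleft, hright,
    intervalIntegral.integral_sub intervalIntegrable_const intervalIntegral.intervalIntegrable_id,
    intervalIntegral.integral_sub intervalIntegral.intervalIntegrable_id intervalIntegrable_const,
    integral_id, integral_id, intervalIntegral.integral_const, intervalIntegral.integral_const,
    smul_eq_mul, smul_eq_mul]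
  ring

lemma integral_abs_sub_add_abs_sub {a b c : ℝ} (h : |a - b| ≤ c) :
    ∫ x in (a + b - c) / 2..(a + b + c) / 2, (|x - a| + |x - b|) = (c ^ 2 + (a - b) ^ 2) / 2 := by
  have ha : a ∈ Icc ((a + b - c) / 2) ((a + b + c) / 2) :=
    (abs_sub_add_abs_sub_le_iff h).1 (by simpa using h)
  have hb : b ∈ Icc ((a + b - c) / 2) ((a + b + c) / 2) :=
    (abs_sub_add_abs_sub_le_iff h).1 (by simpa [abs_sub_comm b a] using h)
  have hi : ∀ d : ℝ, IntervalIntegrable (fun x => |x - d|) volume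
      ((a + b - c) / 2) ((a + b + c) / 2) :=
    fun d => (by fun_prop : Continuous fun x : ℝ => |x - d|).intervalIntegrable _ _
  rw [intervalIntegral.integral_add (hi a) (hi b), integral_abs_sub ha.1 ha.2,
    integral_abs_sub hb.1 hb.2]
  ring

theorem taxicab_ellipse_octagon_area_general (x₁ y₁ x₂ y₂ γ : ℝ)
    (hδ : -γ > |x₁ - x₂| + |y₁ - y₂|) :
    let α : ℝ := (-γ - (|x₁ - x₂| + |y₁ - y₂|)) / 2
    volume {p : ℝ × ℝ | |p.1 - x₁| + |p.2 - y₁| + |p.1 - x₂| + |p.2 - y₂| ≤ -γ} =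
      ENNReal.ofReal ((|x₁ - x₂| + 2 * α) * (|y₁ - y₂| + 2 * α) - 2 * α ^ 2) := by
  intro α
  set c := -γ - |y₁ - y₂|
  have hc : |x₁ - x₂| ≤ c := by linarith
  have hregion : {p : ℝ × ℝ | |p.1 - x₁| + |p.2 - y₁| + |p.1 - x₂| + |p.2 - y₂| ≤ -γ} =
      {p | |p.2 - y₁| + |p.2 - y₂| ≤ -γ - (|p.1 - x₁| + |p.1 - x₂|)} := by
    ext p
    simp only [mem_ofPred_eq]
    constructor <;> intro <;> linarith
  have hslab : {x : ℝ | |y₁ - y₂| ≤ -γ - (|x - x₁| + |x - x₂|)} =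
      Icc ((x₁ + x₂ - c) / 2) ((x₁ + x₂ + c) / 2) :=
    Set.ext fun x => le_sub_comm.trans (abs_sub_add_abs_sub_le_iff hc)
  have hcont : Continuous fun x : ℝ => |x - x₁| + |x - x₂| := by fun_prop
  rw [hregion, volume_setOf_abs_sub_add_abs_sub_le_sub hcont.measurable
      (hslab ▸ (continuous_const.sub hcont).integrableOn_Icc),
    hslab, integral_Icc_eq_integral_Ioc,
    ← intervalIntegral.integral_of_le (by linarith [abs_nonneg (x₁ - x₂)]),
    intervalIntegral.integral_sub intervalIntegrable_const (hcont.intervalIntegrable _ _),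
    integral_abs_sub_add_abs_sub hc, intervalIntegral.integral_const, smul_eq_mul]
  congr 1
  linear_combination (1 / 2 : ℝ) * sq_abs (x₁ - x₂)

/-- Area of the octagonal taxicab ellipse region (E.2). -/
theorem taxicab_ellipse_octagon_area (x₁ y₁ x₂ y₂ γ : ℝ)
    (hx : x₁ ≠ x₂) (hy : y₁ ≠ y₂) (hγ : γ ≤ 0)
    (hδ : -γ > |x₁ - x₂| + |y₁ - y₂|) :
    let α : ℝ := (-γ - (|x₁ - x₂| + |y₁ - y₂|)) / 2
    volume {p : ℝ × ℝ | |p.1 - x₁| + |p.2 - y₁| + |p.1 - x₂| + |p.2 - y₂| ≤ -γ} =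
      ENNReal.ofReal ((|x₁ - x₂| + 2 * α) * (|y₁ - y₂| + 2 * α) - 2 * α ^ 2) :=
  taxicab_ellipse_octagon_area_general x₁ y₁ x₂ y₂ γ hδ
end

section
/- The perimeter (in the taxicab metric) of the boundary of the region {(x,y) : |x+1| + |x-1| + |x| + 3|y| ≤ S} equals (16/3)(S-2) for 2 < S < 3 and equals (8/3)(S-1) for S ≥ 3. -/
/-!
Since `|x + 1| + |x - 1| = 2 max 1 |x|`, the region is the intersection of the rhombi
`|x| + 3|y| ≤ S - 2` and `|x| + |y| ≤ S / 3`; the second one only cuts off the corners at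
`(±(S - 2), 0)` when `S > 3`. The region is convex and contains the listed vertices, which
gives one inclusion. For the other, everything is symmetric under both coordinate reflections,
so it suffices to cover the first quadrant of the region by triangles with apex at the origin
spanned by two consecutive vertices; the origin lies in the hull as the midpoint of opposite
vertices. The perimeters are then a direct computation.
-/

/-- Taxicab length of a segment. -/
def tlen (P Q : ℝ × ℝ) : ℝ := |P.1 - Q.1| + |P.2 - Q.2|

theorem Set.MapsTo.convexHull {𝕜 E F : Type*} [Ring 𝕜] [PartialOrder 𝕜] [AddCommGroup E]
    [AddCommGroup F] [Module 𝕜 E] [Module 𝕜 F] {s : Set E} {t : Set F} {f : E →ₗ[𝕜] F}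
    (h : Set.MapsTo f s t) : Set.MapsTo f (convexHull 𝕜 s) (convexHull 𝕜 t) := by
  rw [Set.mapsTo_iff_image_subset, LinearMap.image_convexHull]
  exact convexHull_mono h.image_subset

section ConvexHull

variable {𝕜 E : Type*} [Field 𝕜] [LinearOrder 𝕜] [IsStrictOrderedRing 𝕜] [AddCommGroup E]
  [Module 𝕜 E] {s : Set E}

theorem zero_mem_convexHull_of_neg_mem (hs : ∀ v ∈ s, -v ∈ s) {v : E}
    (hv : v ∈ s) : (0 : E) ∈ convexHull 𝕜 s := by
  have := convex_convexHull 𝕜 s (subset_convexHull 𝕜 s hv) (subset_convexHull 𝕜 s (hs v hv))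
    (a := 2⁻¹) (b := 2⁻¹) (by positivity) (by positivity) (by norm_num)
  simpa using this

theorem smul_add_smul_mem_convexHull (h₀ : (0 : E) ∈ convexHull 𝕜 s) {x y : E} (hx : x ∈ s)
    (hy : y ∈ s) {a b : 𝕜} (ha : 0 ≤ a) (hb : 0 ≤ b) (hab : a + b ≤ 1) :
    a • x + b • y ∈ convexHull 𝕜 s := by
  have := (convex_convexHull 𝕜 s).sum_mem (t := Finset.univ) (w := ![a, b, 1 - a - b])
    (z := ![x, y, 0]) (by intro i _; fin_cases i <;> simp [ha, hb]; linarith)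
    (by simp [Fin.sum_univ_three])
    (by intro i _; fin_cases i <;> simp [subset_convexHull 𝕜 s hx, subset_convexHull 𝕜 s hy, h₀])
  simpa [Fin.sum_univ_three] using this

end ConvexHull

theorem mem_convexHull_of_abs_mem {V : Set (ℝ × ℝ)} (h₁ : ∀ v ∈ V, (-v.1, v.2) ∈ V)
    (h₂ : ∀ v ∈ V, (v.1, -v.2) ∈ V) {p : ℝ × ℝ} (hp : (|p.1|, |p.2|) ∈ convexHull ℝ V) :
    p ∈ convexHull ℝ V := by
  have flip₁ := Set.MapsTo.convexHull (s := V) (t := V)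
    (f := (-LinearMap.id : ℝ →ₗ[ℝ] ℝ).prodMap LinearMap.id) (fun v hv => by simpa using h₁ v hv)
  have flip₂ := Set.MapsTo.convexHull (s := V) (t := V)
    (f := LinearMap.id.prodMap (-LinearMap.id : ℝ →ₗ[ℝ] ℝ)) (fun v hv => by simpa using h₂ v hv)
  have hq : (p.1, |p.2|) ∈ convexHull ℝ V := by
    rcases le_total 0 p.1 with h | h
    · rwa [abs_of_nonneg h] at hp
    · simpa [abs_of_nonpos h] using flip₁ hp
  rcases le_total 0 p.2 with h | h
  · rwa [abs_of_nonneg h] at hq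
  · simpa [abs_of_nonpos h] using flip₂ hq

theorem convex_abs_add_mul_abs_le {c : ℝ} (hc : 0 ≤ c) (t : ℝ) :
    Convex ℝ {p : ℝ × ℝ | |p.1| + c * |p.2| ≤ t} := by
  have hf := (convexOn_univ_norm.comp_linearMap (LinearMap.fst ℝ ℝ ℝ)).add
    ((convexOn_univ_norm.comp_linearMap (LinearMap.snd ℝ ℝ ℝ)).smul hc)
  simpa using hf.convex_le t

theorem abs_add_one_add_abs_sub_one (x : ℝ) : |x + 1| + |x - 1| = 2 * max 1 |x| := by
  rcases abs_cases (x + 1) with ⟨h₁, _⟩ | ⟨h₁, _⟩ <;>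
    rcases abs_cases (x - 1) with ⟨h₂, _⟩ | ⟨h₂, _⟩ <;>
    rcases abs_cases x with ⟨h₃, _⟩ | ⟨h₃, _⟩ <;>
    rcases max_cases 1 |x| with ⟨h₄, _⟩ | ⟨h₄, _⟩ <;> linarith

def trifocalRegion (S : ℝ) : Set (ℝ × ℝ) := {p | |p.1 + 1| + |p.1 - 1| + |p.1| + 3 * |p.2| ≤ S}

theorem mem_trifocalRegion_iff {S : ℝ} {p : ℝ × ℝ} :
    p ∈ trifocalRegion S ↔ |p.1| + 3 * |p.2| ≤ S - 2 ∧ |p.1| + |p.2| ≤ S / 3 := by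
  rw [trifocalRegion, Set.mem_ofPred_eq, abs_add_one_add_abs_sub_one]
  constructor
  · intro h
    constructor <;> linarith [le_max_left 1 |p.1|, le_max_right 1 |p.1|]
  · rintro ⟨h₁, h₂⟩
    rcases max_cases 1 |p.1| with ⟨h, _⟩ | ⟨h, _⟩ <;> linarith

theorem convex_trifocalRegion (S : ℝ) : Convex ℝ (trifocalRegion S) := by
  have h : trifocalRegion S =
      {p | |p.1| + 3 * |p.2| ≤ S - 2} ∩ {p | |p.1| + 1 * |p.2| ≤ S / 3} := by
    ext p; simp [mem_trifocalRegion_iff]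
  rw [h]
  exact (convex_abs_add_mul_abs_le (by norm_num) _).inter (convex_abs_add_mul_abs_le (by norm_num) _)

theorem trifocalRegion_eq_convexHull {S : ℝ} {V : Set (ℝ × ℝ)} (hV : V ⊆ trifocalRegion S)
    (h₁ : ∀ v ∈ V, (-v.1, v.2) ∈ V) (h₂ : ∀ v ∈ V, (v.1, -v.2) ∈ V)
    (hquad : ∀ x y, 0 ≤ x → 0 ≤ y → (x, y) ∈ trifocalRegion S →
      ∃ u ∈ V, ∃ v ∈ V, ∃ a b : ℝ, 0 ≤ a ∧ 0 ≤ b ∧ a + b ≤ 1 ∧ (x, y) = a • u + b • v) :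
    trifocalRegion S = convexHull ℝ V := by
  refine subset_antisymm (fun p hp => mem_convexHull_of_abs_mem h₁ h₂ ?_)
    (convexHull_min hV (convex_trifocalRegion S))
  obtain ⟨u, hu, v, hv, a, b, ha, hb, hab, hp⟩ := hquad _ _ (abs_nonneg _) (abs_nonneg _)
    (by simpa [mem_trifocalRegion_iff] using hp)
  have h₀ : (0 : ℝ × ℝ) ∈ convexHull ℝ V :=
    zero_mem_convexHull_of_neg_mem (fun w hw => h₂ _ (h₁ w hw)) hu
  exact hp ▸ smul_add_smul_mem_convexHull h₀ hu hv ha hb hab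

theorem trifocalRegion_eq_rhombus {S : ℝ} (h₂ : 2 < S) (h₃ : S < 3) :
    trifocalRegion S =
      convexHull ℝ {(S - 2, 0), (0, (S - 2) / 3), (-(S - 2), 0), (0, -(S - 2) / 3)} := by
  apply trifocalRegion_eq_convexHull
  · have h₀ : 0 ≤ S - 2 := by linarith
    have h₀' : 0 ≤ (S - 2) / 3 := by linarith
    rintro _ (rfl | rfl | rfl | rfl) <;>
      simp only [mem_trifocalRegion_iff, abs_neg, neg_div, abs_zero, abs_of_nonneg h₀,
        abs_of_nonneg h₀'] <;> constructor <;> linarith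
  · rintro _ (rfl | rfl | rfl | rfl) <;> simp [neg_div, -neg_sub]
  · rintro _ (rfl | rfl | rfl | rfl) <;> simp [neg_div, -neg_sub]
  · intro x y hx hy hxy
    have hS : 0 < S - 2 := by linarith
    refine ⟨(S - 2, 0), by simp, (0, (S - 2) / 3), by simp, x / (S - 2), 3 * y / (S - 2),
      by positivity, by positivity, ?_, ?_⟩
    · rw [mem_trifocalRegion_iff, abs_of_nonneg hx, abs_of_nonneg hy] at hxy
      rw [← add_div, div_le_one hS]
      linarith
    · ext <;> simp <;> field_simp

theorem trifocalRegion_eq_octagon {S : ℝ} (h₃ : 3 ≤ S) :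
    trifocalRegion S =
      convexHull ℝ {(S / 3, 0), (1, (S - 3) / 3), (0, (S - 2) / 3), (-1, (S - 3) / 3),
        (-S / 3, 0), (-1, -(S - 3) / 3), (0, -(S - 2) / 3), (1, -(S - 3) / 3)} := by
  apply trifocalRegion_eq_convexHull
  · have hA : 0 ≤ S / 3 := by linarith
    have hB : 0 ≤ (S - 3) / 3 := by linarith
    have hC : 0 ≤ (S - 2) / 3 := by linarith
    rintro _ (rfl | rfl | rfl | rfl | rfl | rfl | rfl | rfl) <;>
      simp only [mem_trifocalRegion_iff, abs_neg, neg_div, abs_zero, abs_one, abs_of_nonneg hA,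
        abs_of_nonneg hB, abs_of_nonneg hC] <;> constructor <;> linarith
  · rintro _ (rfl | rfl | rfl | rfl | rfl | rfl | rfl | rfl) <;> simp [neg_div, -neg_sub]
  · rintro _ (rfl | rfl | rfl | rfl | rfl | rfl | rfl | rfl) <;> simp [neg_div, -neg_sub]
  · intro x y hx hy hxy
    rw [mem_trifocalRegion_iff, abs_of_nonneg hx, abs_of_nonneg hy] at hxy
    obtain ⟨hxy₁, hxy₂⟩ := hxy
    -- which side of the diagonal from the origin to `(1, (S - 3) / 3)` the point lies on
    rcases lt_or_ge (3 * y) ((S - 3) * x) with h | h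
    · have hS : 0 < S - 3 := by
        by_contra! hS
        nlinarith
      have hS₀ : 0 < S := by linarith
      refine ⟨(S / 3, 0), by simp, (1, (S - 3) / 3), by simp,
        3 * ((S - 3) * x - 3 * y) / (S * (S - 3)), 3 * y / (S - 3),
        div_nonneg (by linarith) (by positivity), by positivity, ?_, ?_⟩
      · have hsum : 3 * ((S - 3) * x - 3 * y) / (S * (S - 3)) + 3 * y / (S - 3) =
            3 * (x + y) / S := by
          field_simp
          ring
        rw [hsum, div_le_one hS₀]
        linarith
      · ext <;> simp <;> field_simp; ring
    · have hS : 0 < S - 2 := by linarith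
      refine ⟨(1, (S - 3) / 3), by simp, (0, (S - 2) / 3), by simp, x,
        (3 * y - (S - 3) * x) / (S - 2), hx, div_nonneg (by linarith) hS.le, ?_, ?_⟩
      · rw [← le_sub_iff_add_le', div_le_iff₀ hS]
        linarith
      · ext <;> simp; field_simp; ring

theorem rhombus_perimeter {S : ℝ} (h₂ : 2 ≤ S) :
    tlen (S - 2, 0) (0, (S - 2) / 3) + tlen (0, (S - 2) / 3) (-(S - 2), 0) +
      tlen (-(S - 2), 0) (0, -(S - 2) / 3) + tlen (0, -(S - 2) / 3) (S - 2, 0) =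
      16 / 3 * (S - 2) := by
  simp only [tlen]
  repeat first
    | rw [abs_of_nonneg (by linarith)]
    | rw [abs_of_nonpos (by linarith)]
  ring

theorem octagon_perimeter {S : ℝ} (h₃ : 3 ≤ S) :
    tlen (S / 3, 0) (1, (S - 3) / 3) + tlen (1, (S - 3) / 3) (0, (S - 2) / 3) +
      tlen (0, (S - 2) / 3) (-1, (S - 3) / 3) + tlen (-1, (S - 3) / 3) (-S / 3, 0) +
      tlen (-S / 3, 0) (-1, -(S - 3) / 3) + tlen (-1, -(S - 3) / 3) (0, -(S - 2) / 3) +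
      tlen (0, -(S - 2) / 3) (1, -(S - 3) / 3) + tlen (1, -(S - 3) / 3) (S / 3, 0) =
      8 / 3 * (S - 1) := by
  simp only [tlen]
  repeat first
    | rw [abs_of_nonneg (by linarith)]
    | rw [abs_of_nonpos (by linarith)]
  ring

/-- Taxicab perimeter of the trifocal taxicab ellipse (formulas (10)):
for 2 < S < 3 the region is the rhombus with the listed vertices and its taxicab
perimeter is (16/3)(S-2); for S ≥ 3 it is the octagon with the listed vertices and
its taxicab perimeter is (8/3)(S-1). -/
theorem trifocal_taxicab_perimeter (S : ℝ) :
    (2 < S → S < 3 →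
      {p : ℝ × ℝ | |p.1 + 1| + |p.1 - 1| + |p.1| + 3 * |p.2| ≤ S} =
        convexHull ℝ {(S - 2, 0), (0, (S - 2) / 3), (-(S - 2), 0), (0, -(S - 2) / 3)} ∧
      tlen (S - 2, 0) (0, (S - 2) / 3) + tlen (0, (S - 2) / 3) (-(S - 2), 0) +
        tlen (-(S - 2), 0) (0, -(S - 2) / 3) + tlen (0, -(S - 2) / 3) (S - 2, 0) =
        (16 / 3) * (S - 2)) ∧
    (3 ≤ S →
      {p : ℝ × ℝ | |p.1 + 1| + |p.1 - 1| + |p.1| + 3 * |p.2| ≤ S} =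
        convexHull ℝ {(S / 3, 0), (1, (S - 3) / 3), (0, (S - 2) / 3), (-1, (S - 3) / 3),
          (-S / 3, 0), (-1, -(S - 3) / 3), (0, -(S - 2) / 3), (1, -(S - 3) / 3)} ∧
      tlen (S / 3, 0) (1, (S - 3) / 3) + tlen (1, (S - 3) / 3) (0, (S - 2) / 3) +
        tlen (0, (S - 2) / 3) (-1, (S - 3) / 3) + tlen (-1, (S - 3) / 3) (-S / 3, 0) +
        tlen (-S / 3, 0) (-1, -(S - 3) / 3) + tlen (-1, -(S - 3) / 3) (0, -(S - 2) / 3) +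
        tlen (0, -(S - 2) / 3) (1, -(S - 3) / 3) + tlen (1, -(S - 3) / 3) (S / 3, 0) =
        (8 / 3) * (S - 1)) := by
  exact ⟨fun h₂ h₃ => ⟨trifocalRegion_eq_rhombus h₂ h₃, rhombus_perimeter h₂.le⟩,
    fun h₃ => ⟨trifocalRegion_eq_octagon h₃, octagon_perimeter h₃⟩⟩
end

section
/- Let F₁ = (x₁,y₁), F₂ = (x₂,y₂) with y₁ = y₂, and γ ≤ 0 with -γ > δ = |x₁ - x₂|. With 2α = -γ - δ, the hexagonal taxicab ellipse region {(x,y) : |x-x₁|+|y-y₁|+|x-x₂|+|y-y₂| ≤ -γ} has Lebesgue measure 2α·(-γ) - 2α², and its taxicab perimeter is 2(-γ) + 4α. -/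
/-!
When both foci lie on the line `y = c`, the taxicab distance sum at `(x, y)` is
`|x - x₁| + |x - x₂| + 2 |y - c|`. The first two terms add up to `b - a` on `[a, b]`
(`a = min x₁ x₂`, `b = max x₁ x₂`) and grow with slope 2 outside it, so the horizontal slice at
height `y` is the interval `[a - α + |y - c|, b + α - |y - c|]` when `|y - c| ≤ α` and empty
otherwise. This exhibits the region as a hexagon. Its area follows from Cavalieri's principle,
integrating the slice length `b - a + 2α - 2|y - c|`, and it is the convex hull of its six
vertices because it is convex and each slice joins a point of a left edge to a point of a right
edge.
-/

open MeasureTheory Set AffineMap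

def taxicabEllipse (F₁ F₂ : ℝ × ℝ) (r : ℝ) : Set (ℝ × ℝ) := {p | tlen p F₁ + tlen p F₂ ≤ r}

def taxicabHexagon (a b c α : ℝ) : Set (ℝ × ℝ) :=
  {p | p.2 ∈ Icc (c - α) (c + α) ∧ p.1 ∈ Icc (a - α + |p.2 - c|) (b + α - |p.2 - c|)}

theorem convexOn_tlen_left (F : ℝ × ℝ) : ConvexOn ℝ univ (fun p => tlen p F) := by
  have h (z : ℝ) : ConvexOn ℝ univ (fun x : ℝ => |x - z|) := by
    simpa only [Real.dist_eq] using convexOn_dist z convex_univ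
  exact ((h F.1).comp_linearMap (LinearMap.fst ℝ ℝ ℝ)).add
    ((h F.2).comp_linearMap (LinearMap.snd ℝ ℝ ℝ))

theorem convex_taxicabEllipse (F₁ F₂ : ℝ × ℝ) (r : ℝ) : Convex ℝ (taxicabEllipse F₁ F₂ r) := by
  convert ((convexOn_tlen_left F₁).add (convexOn_tlen_left F₂)).convex_le r
  simp [taxicabEllipse]

theorem taxicabEllipse_eq_taxicabHexagon (x₁ x₂ c r : ℝ) :
    taxicabEllipse (x₁, c) (x₂, c) r =
      taxicabHexagon (min x₁ x₂) (max x₁ x₂) c ((r - |x₁ - x₂|) / 2) := by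
  ext ⟨x, y⟩
  have hsum : |x - x₁| + |x - x₂| = |x - min x₁ x₂| + |x - max x₁ x₂| := by
    rcases le_total x₁ x₂ with h | h <;> simp [h, add_comm]
  simp only [taxicabEllipse, taxicabHexagon, tlen, mem_ofPred_eq, mem_Icc,
    ← max_sub_min_eq_abs']
  grind [min_le_max]

theorem volume_setOf_snd_mem_and_fst_mem_Icc {s : Set ℝ} (hs : MeasurableSet s) {f g : ℝ → ℝ}
    (hf : Measurable f) (hg : Measurable g) :
    volume {p : ℝ × ℝ | p.2 ∈ s ∧ p.1 ∈ Icc (f p.2) (g p.2)} =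
      ∫⁻ y in s, ENNReal.ofReal (g y - f y) := by
  have hmeas : MeasurableSet {p : ℝ × ℝ | p.2 ∈ s ∧ p.1 ∈ Icc (f p.2) (g p.2)} :=
    (measurableSet_region_between_cc hf hg hs).preimage measurable_swap
  rw [Measure.volume_eq_prod, Measure.prod_apply_symm hmeas, ← lintegral_indicator hs]
  congr 1 with y
  by_cases hy : y ∈ s
  · rw [indicator_of_mem hy, ← Real.volume_Icc]
    congr 1 with x
    simp [hy]
  · simp [hy]

theorem integral_abs_sub_centered (c : ℝ) {α : ℝ} (hα : 0 ≤ α) :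
    ∫ y in (c - α)..(c + α), |y - c| = α ^ 2 := by
  rw [intervalIntegral.integral_comp_sub_right (fun y => |y|), sub_sub_cancel_left,
    add_sub_cancel_left, ← intervalIntegral.integral_add_adjacent_intervals (b := 0)
      (continuous_abs.intervalIntegrable _ _) (continuous_abs.intervalIntegrable _ _)]
  have hneg : ∫ y in -α..0, |y| = ∫ y in -α..0, -y :=
    intervalIntegral.integral_congr fun y hy => abs_of_nonpos (by
      rw [uIcc_of_le (by linarith)] at hy; exact hy.2)
  have hpos : ∫ y in 0..α, |y| = ∫ y in 0..α, y :=
    intervalIntegral.integral_congr fun y hy => abs_of_nonneg (by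
      rw [uIcc_of_le hα] at hy; exact hy.1)
  rw [hneg, hpos, intervalIntegral.integral_neg, integral_id, integral_id]
  ring

theorem volume_taxicabHexagon {a b : ℝ} (hab : a ≤ b) (c : ℝ) {α : ℝ} (hα : 0 ≤ α) :
    volume (taxicabHexagon a b c α) = ENNReal.ofReal (2 * α * (b - a) + 2 * α ^ 2) := by
  have hslice (y : ℝ) : b + α - |y - c| - (a - α + |y - c|) = b - a + 2 * α - 2 * |y - c| := by
    ring
  refine (volume_setOf_snd_mem_and_fst_mem_Icc measurableSet_Icc
    (f := fun y => a - α + |y - c|) (g := fun y => b + α - |y - c|) (by fun_prop)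
    (by fun_prop)).trans ?_
  simp only [hslice]
  rw [← ofReal_integral_eq_lintegral_ofReal]
  · rw [integral_Icc_eq_integral_Ioc, ← intervalIntegral.integral_of_le (by linarith),
      intervalIntegral.integral_sub intervalIntegrable_const
        ((by fun_prop : Continuous fun y : ℝ => 2 * |y - c|).intervalIntegrable _ _),
      intervalIntegral.integral_const, intervalIntegral.integral_const_mul,
      integral_abs_sub_centered c hα, smul_eq_mul]
    ring_nf
  · exact (by fun_prop : Continuous fun y : ℝ => b - a + 2 * α - 2 * |y - c|).integrableOn_Icc
  · refine (ae_restrict_iff' measurableSet_Icc).2 (ae_of_all _ fun y hy => ?_)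
    have : |y - c| ≤ α := abs_sub_le_iff.2 ⟨by linarith [hy.2], by linarith [hy.1]⟩
    simp only [Pi.zero_apply]
    linarith

/-- A convex set containing the corners of a trapezoid with horizontal parallel sides contains
every horizontal chord of the trapezoid. -/
theorem Convex.mk_lineMap_mem {S : Set (ℝ × ℝ)} (hS : Convex ℝ S)
    {a₀ a₁ b₀ b₁ y₀ y₁ x t : ℝ} (ht : t ∈ Icc 0 1)
    (ha₀ : (a₀, y₀) ∈ S) (ha₁ : (a₁, y₁) ∈ S) (hb₀ : (b₀, y₀) ∈ S) (hb₁ : (b₁, y₁) ∈ S)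
    (hx : x ∈ Icc (lineMap a₀ a₁ t) (lineMap b₀ b₁ t)) : (x, lineMap y₀ y₁ t) ∈ S := by
  have hprod (u v : ℝ × ℝ) : lineMap u v t = (lineMap u.1 v.1 t, lineMap u.2 v.2 t) := by
    ext <;> simp [lineMap_apply_module]
  have hL := hS.lineMap_mem ha₀ ha₁ ht
  have hR := hS.lineMap_mem hb₀ hb₁ ht
  rw [hprod] at hL hR
  refine hS.segment_subset hL hR ?_
  rw [← Prod.image_mk_segment_left, segment_eq_Icc (hx.1.trans hx.2)]
  exact mem_image_of_mem _ hx

theorem taxicabHexagon_subset_convexHull (a b c : ℝ) {α : ℝ} (hα : 0 < α) :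
    taxicabHexagon a b c α ⊆ convexHull ℝ {(b + α, c), (b, c + α), (a, c + α), (a - α, c),
      (a, c - α), (b, c - α)} := by
  rintro ⟨x, y⟩ ⟨hy, hx⟩
  have hS := convex_convexHull ℝ ({(b + α, c), (b, c + α), (a, c + α), (a - α, c),
      (a, c - α), (b, c - α)} : Set (ℝ × ℝ))
  have hV {p : ℝ × ℝ} (hp : p ∈ ({(b + α, c), (b, c + α), (a, c + α), (a - α, c),
      (a, c - α), (b, c - α)} : Set (ℝ × ℝ))) := subset_convexHull ℝ _ hp
  have ht : |y - c| / α ∈ Icc 0 1 :=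
    ⟨by positivity, (div_le_one hα).2 (abs_sub_le_iff.2 ⟨by linarith [hy.2], by linarith [hy.1]⟩)⟩
  have hx' : x ∈ Icc (lineMap (a - α) a (|y - c| / α)) (lineMap (b + α) b (|y - c| / α)) := by
    convert hx using 2 <;> simp only [lineMap_apply_ring'] <;> field_simp <;> ring
  rcases abs_choice (y - c) with h | h
  · convert hS.mk_lineMap_mem ht (hV (by simp)) (hV (by simp)) (hV (by simp)) (hV (by simp)) hx'
      (y₀ := c) (y₁ := c + α)
    simp [lineMap_apply_ring', div_mul_cancel₀ _ hα.ne', h]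
  · convert hS.mk_lineMap_mem ht (hV (by simp)) (hV (by simp)) (hV (by simp)) (hV (by simp)) hx'
      (y₀ := c) (y₁ := c - α)
    simp [lineMap_apply_ring', div_mul_cancel₀ _ hα.ne', h]

theorem taxicabHexagon_vertices_subset {a b : ℝ} (hab : a ≤ b) (c : ℝ) {α : ℝ} (hα : 0 ≤ α) :
    {(b + α, c), (b, c + α), (a, c + α), (a - α, c), (a, c - α), (b, c - α)} ⊆
      taxicabHexagon a b c α := by
  rintro p (rfl | rfl | rfl | rfl | rfl | rfl) <;>
    simp [taxicabHexagon, abs_of_nonneg hα] <;> constructor <;> linarith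

theorem taxicabEllipse_eq_convexHull (x₁ x₂ c r : ℝ) (hr : |x₁ - x₂| < r) :
    let α := (r - |x₁ - x₂|) / 2
    let a := min x₁ x₂
    let b := max x₁ x₂
    taxicabEllipse (x₁, c) (x₂, c) r = convexHull ℝ {(b + α, c), (b, c + α), (a, c + α),
      (a - α, c), (a, c - α), (b, c - α)} := by
  intro α a b
  have hα : 0 < α := by simp only [α]; linarith
  have hab : a ≤ b := min_le_max
  rw [taxicabEllipse_eq_taxicabHexagon]
  refine (taxicabHexagon_subset_convexHull a b c hα).antisymm (convexHull_min ?_ ?_)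
  · exact taxicabHexagon_vertices_subset hab c hα.le
  · rw [← taxicabEllipse_eq_taxicabHexagon]
    exact convex_taxicabEllipse _ _ r

theorem taxicabHexagon_perimeter {a b : ℝ} (hab : a ≤ b) (c : ℝ) {α : ℝ} (hα : 0 ≤ α) :
    tlen (b + α, c) (b, c + α) + tlen (b, c + α) (a, c + α) +
      tlen (a, c + α) (a - α, c) + tlen (a - α, c) (a, c - α) +
      tlen (a, c - α) (b, c - α) + tlen (b, c - α) (b + α, c) = 2 * (b - a) + 8 * α := by
  simp [tlen, abs_of_nonneg hα, abs_of_nonneg (sub_nonneg.2 hab), abs_sub_comm a b]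
  ring

theorem taxicab_ellipse_hexagon_area_perimeter_general (x₁ y₁ x₂ y₂ γ : ℝ)
    (hy : y₁ = y₂) (hδ : -γ > |x₁ - x₂|) :
    let α : ℝ := (-γ - |x₁ - x₂|) / 2
    let a : ℝ := min x₁ x₂
    let b : ℝ := max x₁ x₂
    {p : ℝ × ℝ | |p.1 - x₁| + |p.2 - y₁| + |p.1 - x₂| + |p.2 - y₂| ≤ -γ} =
      convexHull ℝ {(b + α, y₁), (b, y₁ + α), (a, y₁ + α), (a - α, y₁),
                    (a, y₁ - α), (b, y₁ - α)} ∧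
    volume {p : ℝ × ℝ | |p.1 - x₁| + |p.2 - y₁| + |p.1 - x₂| + |p.2 - y₂| ≤ -γ} =
      ENNReal.ofReal (2 * α * (-γ) - 2 * α ^ 2) ∧
    tlen (b + α, y₁) (b, y₁ + α) + tlen (b, y₁ + α) (a, y₁ + α) +
      tlen (a, y₁ + α) (a - α, y₁) + tlen (a - α, y₁) (a, y₁ - α) +
      tlen (a, y₁ - α) (b, y₁ - α) + tlen (b, y₁ - α) (b + α, y₁) =
      2 * (-γ) + 4 * α := by
  subst hy
  intro α a b
  have hE : {p : ℝ × ℝ | |p.1 - x₁| + |p.2 - y₁| + |p.1 - x₂| + |p.2 - y₁| ≤ -γ} =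
      taxicabEllipse (x₁, y₁) (x₂, y₁) (-γ) := by
    simp only [taxicabEllipse, tlen, add_assoc]
  have hα : 0 ≤ α := by simp only [α]; linarith
  have hab : a ≤ b := min_le_max
  have hγ : -γ = b - a + 2 * α := by simp only [α, a, b, max_sub_min_eq_abs']; ring
  refine ⟨hE.trans (taxicabEllipse_eq_convexHull x₁ x₂ y₁ (-γ) hδ), ?_, ?_⟩
  · rw [hE, taxicabEllipse_eq_taxicabHexagon, volume_taxicabHexagon hab y₁ hα, hγ]
    congr 1
    ring
  · rw [taxicabHexagon_perimeter hab y₁ hα, hγ]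
    ring

/-- Area and taxicab perimeter of the hexagonal taxicab ellipse (E.1):
foci on a common horizontal line, -γ > δ. The region is the hexagon with the
listed vertices, its area is 2α(-γ) - 2α² and its taxicab perimeter is 2(-γ) + 4α. -/
theorem taxicab_ellipse_hexagon_area_perimeter (x₁ y₁ x₂ y₂ γ : ℝ)
    (hy : y₁ = y₂) (hγ : γ ≤ 0) (hδ : -γ > |x₁ - x₂|) :
    let α : ℝ := (-γ - |x₁ - x₂|) / 2
    let a : ℝ := min x₁ x₂
    let b : ℝ := max x₁ x₂
    {p : ℝ × ℝ | |p.1 - x₁| + |p.2 - y₁| + |p.1 - x₂| + |p.2 - y₂| ≤ -γ} =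
      convexHull ℝ {(b + α, y₁), (b, y₁ + α), (a, y₁ + α), (a - α, y₁),
                    (a, y₁ - α), (b, y₁ - α)} ∧
    volume {p : ℝ × ℝ | |p.1 - x₁| + |p.2 - y₁| + |p.1 - x₂| + |p.2 - y₂| ≤ -γ} =
      ENNReal.ofReal (2 * α * (-γ) - 2 * α ^ 2) ∧
    tlen (b + α, y₁) (b, y₁ + α) + tlen (b, y₁ + α) (a, y₁ + α) +
      tlen (a, y₁ + α) (a - α, y₁) + tlen (a - α, y₁) (a, y₁ - α) +
      tlen (a, y₁ - α) (b, y₁ - α) + tlen (b, y₁ - α) (b + α, y₁) =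
      2 * (-γ) + 4 * α :=
  taxicab_ellipse_hexagon_area_perimeter_general x₁ y₁ x₂ y₂ γ hy hδ
end
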